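/- arXiv:cs/0604033 — 3 statements merged into one kernel-verified Lean document; each statement's English description precedes it below -/
import Mathlib

section
/- For nonnegative integers j > k and nonnegative integer ν, the integral ∫₀^∞ (ln x) · x^ν e^(-x) L_j^ν(x) L_k^ν(x) dx equals (k+ν)!/(k!·(k-j)) (which is negative). -/
open MeasureTheory Real

/-- Associated Laguerre polynomial `L_n^ν(x) = ∑_{k=0}^n C(n+ν, n-k) (-x)^k / k!`. -/
noncomputable def assocLaguerre (n ν : ℕ) (x : ℝ) : ℝ :=
  ∑ k ∈ Finset.range (n + 1), ((n + ν).choose (n - k) : ℝ) * (-x) ^ k / (Nat.factorial k)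

/-!
Expanding `L_j^ν = ∑ₐ cₐ xᵃ` and `L_k^ν = ∑_b d_b xᵇ` reduces the integral to the log-moments
`∫₀^∞ log x · xᵐ e⁻ˣ dx = Γ'(m + 1)`. By Chu–Vandermonde,
`∑ₐ cₐ Γ(s + a) = Γ(s) · (j + ν - s)_j / j!` with a falling factorial, which vanishes at
`s = ν + b + 1` for every `b < j` (orthogonality).
Differentiating at that point therefore only leaves `Γ(s)` times the derivative of the falling
factorial at one of its roots, a product of factorials; the remaining sum over `b` is a
hockey-stick sum.
-/

open Set Filter Topology Asymptotics Polynomial Finset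

theorem integrableOn_rpow_mul_log_mul_exp_neg {s : ℝ} (hs : 0 < s) :
    IntegrableOn (fun t => t ^ (s - 1) * (log t * exp (-t))) (Ioi 0) := by
  have hexp_top : (fun t : ℝ => exp (-t)) =O[atTop] (· ^ (-(s + 2))) := by
    simpa using (isLittleO_exp_neg_mul_rpow_atTop zero_lt_one (-(s + 2))).isBigO
  have hexp_bot : (fun t : ℝ => exp (-t)) =O[𝓝[>] 0] (· ^ (-(0 : ℝ))) := by
    simp only [neg_zero, rpow_zero]
    exact (continuous_exp.comp continuous_neg).continuousAt.continuousWithinAt.isBigO_one ℝ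
  refine mellin_convergent_of_isBigO_scalar ?_ (isBigO_rpow_top_log_smul (by linarith) hexp_top)
    (lt_add_one s) (isBigO_rpow_zero_log_smul (half_pos hs) hexp_bot) (half_lt_self hs)
  exact ((continuousOn_log.mono fun t ht => ne_of_gt ht).mul
    (continuous_exp.comp continuous_neg).continuousOn).locallyIntegrableOn measurableSet_Ioi

theorem hasDerivAt_Gamma_of_pos {s : ℝ} (hs : 0 < s) :
    HasDerivAt Gamma (∫ t in Ioi 0, t ^ (s - 1) * (log t * exp (-t))) s := by
  have h := (Complex.hasDerivAt_GammaIntegral (s := (s : ℂ)) (by simpa)).real_of_complex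
  have hGamma : (fun x : ℝ => (Complex.GammaIntegral x).re) =ᶠ[𝓝 s] Gamma := by
    filter_upwards [lt_mem_nhds hs] with x hx
    rw [← Complex.Gamma_eq_integral (by simpa), Complex.Gamma_ofReal, Complex.ofReal_re]
  refine (h.congr_of_eventuallyEq hGamma.symm).congr_deriv ?_
  rw [← Complex.ofReal_re (∫ t in Ioi 0, _), ← integral_complex_ofReal]
  refine congrArg Complex.re (setIntegral_congr_fun measurableSet_Ioi fun t (ht : 0 < t) => ?_)
  push_cast [Complex.ofReal_cpow ht.le]
  rfl

theorem rpow_natCast_add_one_sub_one_mul_log_mul_exp_neg (m : ℕ) :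
    (fun t : ℝ => t ^ ((m : ℝ) + 1 - 1) * (log t * exp (-t)))
      = fun t => log t * t ^ m * exp (-t) := by
  ext t
  rw [add_sub_cancel_right, rpow_natCast]
  ring

theorem integrableOn_log_mul_pow_mul_exp_neg (m : ℕ) :
    IntegrableOn (fun x => log x * x ^ m * exp (-x)) (Ioi 0) := by
  simpa only [rpow_natCast_add_one_sub_one_mul_log_mul_exp_neg] using
    integrableOn_rpow_mul_log_mul_exp_neg (s := m + 1) (by positivity)

theorem hasDerivAt_Gamma_natCast_add_one (m : ℕ) :
    HasDerivAt Gamma (∫ x in Ioi 0, log x * x ^ m * exp (-x)) (m + 1) := by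
  simpa only [rpow_natCast_add_one_sub_one_mul_log_mul_exp_neg] using
    hasDerivAt_Gamma_of_pos (s := m + 1) (by positivity)

theorem Gamma_add_nat_eq_ascPochhammer_mul {s : ℝ} (hs : ∀ m : ℕ, s ≠ -m) (n : ℕ) :
    Gamma (s + n) = (ascPochhammer ℝ n).eval s * Gamma s := by
  induction n with
  | zero => simp
  | succ n ih =>
    have hsn : s + n ≠ 0 := fun h => hs n (by linarith)
    rw [Nat.cast_succ, ← add_assoc, Gamma_add_one hsn, ih, ascPochhammer_succ_eval]
    ring

theorem descPochhammer_eval_add {R : Type*} [CommRing R] (r t : R) (n : ℕ) :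
    (descPochhammer R n).eval (r + t) = ∑ ij ∈ antidiagonal n,
      n.choose ij.1 * ((descPochhammer R ij.1).eval r * (descPochhammer R ij.2).eval t) := by
  have h (k : ℕ) (x : R) : (descPochhammer ℤ k).smeval x = (descPochhammer R k).eval x := by
    rw [← aeval_eq_smeval, ← eval_map_algebraMap, descPochhammer_map]
  simpa only [h] using Ring.descPochhammer_smeval_add n (Commute.all r t)

theorem descPochhammer_eval_neg_one {R : Type*} [CommRing R] (n : ℕ) :
    (descPochhammer R n).eval (-1) = (-1) ^ n * n.factorial := by
  have h := ascPochhammer_eval_neg_eq_descPochhammer (R := R) (-1) n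
  rw [neg_neg, ascPochhammer_eval_one] at h
  rw [h, ← mul_assoc, ← mul_pow]
  simp

theorem hasDerivAt_descPochhammer_eval_natCast {𝕜 : Type*} [NontriviallyNormedField 𝕜]
    {m n : ℕ} (h : m < n) :
    HasDerivAt (descPochhammer 𝕜 n).eval
      ((-1) ^ (n - 1 - m) * (m.factorial * (n - 1 - m).factorial)) m := by
  obtain ⟨l, rfl⟩ : ∃ l, n = m + (l + 1) := ⟨n - m - 1, by omega⟩
  have hsplit : (descPochhammer 𝕜 (m + (l + 1))).eval = fun x : 𝕜 =>
      (descPochhammer 𝕜 m).eval x * ((x - m) * (descPochhammer 𝕜 l).eval (x - m - 1)) := by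
    ext x
    rw [← descPochhammer_mul, descPochhammer_succ_left]
    simp [sub_sub]
  have hd := ((descPochhammer 𝕜 m).hasDerivAt (m : 𝕜)).mul
    (((hasDerivAt_id (m : 𝕜)).sub_const (m : 𝕜)).mul
      (((descPochhammer 𝕜 l).hasDerivAt ((m : 𝕜) - m - 1)).comp (m : 𝕜)
        (((hasDerivAt_id (m : 𝕜)).sub_const (m : 𝕜)).sub_const 1)))
  rw [hsplit]
  refine hd.congr_deriv ?_
  simp only [id_eq, Pi.mul_apply, Function.comp_apply, sub_self, zero_sub, zero_mul, mul_zero,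
    zero_add, add_zero, one_mul, mul_one, descPochhammer_eval_neg_one,
    descPochhammer_eval_eq_descFactorial, Nat.descFactorial_self, Nat.add_succ_sub_one,
    add_tsub_cancel_left]
  ring

noncomputable def laguerreCoeff (n ν a : ℕ) : ℝ :=
  (-1) ^ a * (n + ν).choose (n - a) / a.factorial

theorem assocLaguerre_eq_sum (n ν : ℕ) (x : ℝ) :
    assocLaguerre n ν x = ∑ a ∈ range (n + 1), laguerreCoeff n ν a * x ^ a := by
  refine sum_congr rfl fun a _ => ?_
  rw [laguerreCoeff, neg_pow]
  ring

theorem sum_laguerreCoeff_mul_ascPochhammer_eval (n ν : ℕ) (s : ℝ) :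
    ∑ a ∈ range (n + 1), laguerreCoeff n ν a * (ascPochhammer ℝ a).eval s
      = (descPochhammer ℝ n).eval ((n + ν : ℕ) - s) / n.factorial := by
  rw [sub_eq_neg_add, descPochhammer_eval_add, Nat.sum_antidiagonal_eq_sum_range_succ
    (fun a i => (n.choose a : ℝ) * ((descPochhammer ℝ a).eval (-s) * (descPochhammer ℝ i).eval
      ((n + ν : ℕ) : ℝ))), sum_div]
  refine sum_congr rfl fun a hmem => ?_
  have ha : a ≤ n := mem_range_succ_iff.mp hmem
  have hasc := ascPochhammer_eval_neg_eq_descPochhammer (R := ℝ) (-s) a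
  have hfact : (n.choose a * a.factorial * (n - a).factorial : ℝ) = n.factorial := by
    exact_mod_cast Nat.choose_mul_factorial_mul_factorial ha
  rw [neg_neg] at hasc
  rw [laguerreCoeff, hasc, descPochhammer_eval_eq_descFactorial,
    Nat.descFactorial_eq_factorial_mul_choose, ← hfact]
  have hchoose : (n.choose a : ℝ) ≠ 0 := by exact_mod_cast (Nat.choose_pos ha).ne'
  push_cast
  field_simp
  rw [← pow_mul, pow_mul', neg_one_sq, one_pow, one_mul]

theorem sum_laguerreCoeff_mul_Gamma_add {s : ℝ} (hs : ∀ m : ℕ, s ≠ -m) (n ν : ℕ) :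
    ∑ a ∈ range (n + 1), laguerreCoeff n ν a * Gamma (s + a)
      = Gamma s * ((descPochhammer ℝ n).eval ((n + ν : ℕ) - s) / n.factorial) := by
  simp only [Gamma_add_nat_eq_ascPochhammer_mul hs, ← sum_laguerreCoeff_mul_ascPochhammer_eval,
    mul_sum]
  exact sum_congr rfl fun a _ => by ring

theorem sum_laguerreCoeff_mul_integral_log_mul_pow {n ν b : ℕ} (hb : b < n) :
    ∑ a ∈ range (n + 1), laguerreCoeff n ν a * ∫ x in Ioi 0, log x * x ^ (ν + b + a) * exp (-x)
      = -((ν + b).factorial * ((-1) ^ b * b.factorial * (n - 1 - b).factorial) / n.factorial) := by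
  set s₀ : ℝ := (ν + b : ℕ) + 1 with hs₀
  have hsum : HasDerivAt (fun s => ∑ a ∈ range (n + 1), laguerreCoeff n ν a * Gamma (s + a))
      (∑ a ∈ range (n + 1), laguerreCoeff n ν a *
        ∫ x in Ioi 0, log x * x ^ (ν + b + a) * exp (-x)) s₀ := by
    refine HasDerivAt.fun_sum fun a _ => ((HasDerivAt.comp_add_const _ _ ?_).const_mul _)
    have hshift : s₀ + a = (ν + b + a : ℕ) + 1 := by
      rw [hs₀]
      push_cast
      ring
    exact hshift ▸ hasDerivAt_Gamma_natCast_add_one (ν + b + a)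
  have hpt : ((n + ν : ℕ) : ℝ) - s₀ = (n - 1 - b : ℕ) := by
    rw [hs₀, Nat.cast_sub (by omega), Nat.cast_sub (by omega)]
    push_cast
    ring
  have hprod := (hasDerivAt_Gamma_natCast_add_one (ν + b)).mul
    ((HasDerivAt.comp_const_sub _ s₀ (hpt ▸ hasDerivAt_descPochhammer_eval_natCast
      (show n - 1 - b < n by omega))).div_const (n.factorial : ℝ))
  have hfun : (fun s => ∑ a ∈ range (n + 1), laguerreCoeff n ν a * Gamma (s + a)) =ᶠ[𝓝 s₀]
      Gamma * fun s : ℝ => (descPochhammer ℝ n).eval ((n + ν : ℕ) - s) / n.factorial := by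
    filter_upwards [lt_mem_nhds (show (0 : ℝ) < s₀ by positivity)] with s hs
    exact sum_laguerreCoeff_mul_Gamma_add
      (fun m => ((neg_nonpos.mpr m.cast_nonneg).trans_lt hs).ne') n ν
  rw [hsum.unique (hprod.congr_of_eventuallyEq hfun), ← hs₀, hpt,
    descPochhammer_eval_coe_nat_of_lt (by omega), hs₀, Gamma_nat_eq_factorial,
    show n - 1 - (n - 1 - b) = b by omega]
  ring

theorem integral_log_mul_assocLaguerre_mul_eq_sum (j k ν : ℕ) :
    ∫ x in Ioi 0, log x * x ^ ν * exp (-x) * assocLaguerre j ν x * assocLaguerre k ν x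
      = ∑ b ∈ range (k + 1), laguerreCoeff k ν b * ∑ a ∈ range (j + 1),
          laguerreCoeff j ν a * ∫ x in Ioi 0, log x * x ^ (ν + b + a) * exp (-x) := by
  have hint (m : ℕ) := integrableOn_log_mul_pow_mul_exp_neg m
  calc _ = ∫ x in Ioi 0, ∑ b ∈ range (k + 1), laguerreCoeff k ν b * ∑ a ∈ range (j + 1),
          laguerreCoeff j ν a * (log x * x ^ (ν + b + a) * exp (-x)) := by
        congr 1
        ext x
        simp only [assocLaguerre_eq_sum, mul_sum, sum_mul]
        exact sum_congr rfl fun b _ => sum_congr rfl fun a _ => by ring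
    _ = _ := by
        rw [integral_finsetSum _ fun b _ =>
          (integrable_finsetSum _ fun a _ => (hint _).const_mul _).const_mul _]
        refine sum_congr rfl fun b _ => ?_
        rw [integral_const_mul, integral_finsetSum _ fun a _ => (hint _).const_mul _]
        simp_rw [integral_const_mul]

theorem sum_choose_mul_factorial_mul_factorial {j k : ℕ} (h : k < j) (ν : ℕ) :
    ∑ b ∈ range (k + 1), (k + ν).choose (k - b) * (ν + b).factorial * (j - 1 - b).factorial
      = (k + ν).factorial * (j - 1 - k).factorial * j.choose k := by
  have hterm : ∀ b ∈ range (k + 1), (k + ν).choose (k - b) * (ν + b).factorial *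
      (j - 1 - b).factorial
        = (k + ν).factorial * (j - 1 - k).factorial * (j - 1 - b).choose (k - b) := by
    intro b hmem
    have hb : b ≤ k := mem_range_succ_iff.mp hmem
    refine Nat.eq_of_mul_eq_mul_right (Nat.factorial_pos (k - b)) ?_
    have h₁ := Nat.choose_mul_factorial_mul_factorial (show k - b ≤ k + ν by omega)
    have h₂ := Nat.choose_mul_factorial_mul_factorial (show k - b ≤ j - 1 - b by omega)
    rw [show k + ν - (k - b) = ν + b by omega] at h₁
    rw [show j - 1 - b - (k - b) = j - 1 - k by omega] at h₂
    linear_combination (j - 1 - b).factorial * h₁ - (k + ν).factorial * h₂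
  have hhockey : ∑ b ∈ range (k + 1), (j - 1 - b).choose (k - b) = j.choose k := by
    rw [← sum_range_reflect]
    calc _ = ∑ c ∈ range (k + 1), (c + (j - 1 - k)).choose (j - 1 - k) := by
          refine sum_congr rfl fun c hmem => ?_
          have hc : c ≤ k := mem_range_succ_iff.mp hmem
          rw [← Nat.choose_symm_add, show j - 1 - (k + 1 - 1 - c) = c + (j - 1 - k) by omega,
            show k - (k + 1 - 1 - c) = c by omega]
      _ = j.choose k := by
          rw [Nat.sum_range_add_choose, show k + (j - 1 - k) + 1 = j by omega,
            show j - 1 - k + 1 = j - k by omega, Nat.choose_symm h.le]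
  rw [sum_congr rfl hterm, ← mul_sum, hhockey]

theorem sum_choose_mul_factorial_mul_factorial_div {j k : ℕ} (h : k < j) (ν : ℕ) :
    (∑ b ∈ range (k + 1),
        ((k + ν).choose (k - b) * (ν + b).factorial * (j - 1 - b).factorial : ℝ)) / j.factorial
      = (k + ν).factorial / (k.factorial * (j - k)) := by
  have hsum := congrArg (Nat.cast (R := ℝ)) (sum_choose_mul_factorial_mul_factorial h ν)
  push_cast at hsum
  have hj := Nat.choose_mul_factorial_mul_factorial h.le
  rw [show j - k = (j - 1 - k) + 1 by omega, Nat.factorial_succ] at hj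
  have hjk : ((j - 1 - k : ℕ) : ℝ) + 1 = j - k := by
    rw [Nat.cast_sub (by omega), Nat.cast_sub (by omega)]
    push_cast
    ring
  have hj' : (j.choose k * k.factorial * ((j - k) * (j - 1 - k).factorial) : ℝ) = j.factorial := by
    rw [← hjk]
    exact_mod_cast hj
  have hjk0 : (j : ℝ) - k ≠ 0 := sub_ne_zero.mpr (by exact_mod_cast h.ne')
  have hchoose : (j.choose k : ℝ) ≠ 0 := by exact_mod_cast (Nat.choose_pos h.le).ne'
  rw [hsum, ← hj']
  field_simp

theorem laguerre_log_weighted_integral (j k ν : ℕ) (h : k < j) :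
    ∫ x in Set.Ioi (0 : ℝ),
      Real.log x * x ^ ν * Real.exp (-x) * assocLaguerre j ν x * assocLaguerre k ν x
      = (Nat.factorial (k + ν) : ℝ) / ((Nat.factorial k : ℝ) * ((k : ℝ) - (j : ℝ))) := by
  have hterm (b : ℕ) (hmem : b ∈ range (k + 1)) :
      laguerreCoeff k ν b * ∑ a ∈ range (j + 1),
        laguerreCoeff j ν a * ∫ x in Ioi 0, log x * x ^ (ν + b + a) * exp (-x)
      = -((k + ν).choose (k - b) * (ν + b).factorial * (j - 1 - b).factorial / j.factorial) := by
    rw [sum_laguerreCoeff_mul_integral_log_mul_pow ((mem_range_succ_iff.mp hmem).trans_lt h),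
      laguerreCoeff]
    field_simp
    rw [← pow_mul, pow_mul', neg_one_sq, one_pow]
    ring
  rw [integral_log_mul_assocLaguerre_mul_eq_sum, sum_congr rfl hterm, sum_neg_distrib, ← sum_div,
    sum_choose_mul_factorial_mul_factorial_div h ν, ← neg_sub (j : ℝ), mul_neg, div_neg]
end

section
/- For M = N, ν = 0 and 0 ≤ ϱ < 1, lim_{M→∞} [Σ_{k=0}^{M−1} Σ_{j=M}^∞ ϱ^{2(j−k)}/(j−k)²] / [Σ_{k=0}^{M−1} ζ(2, M−k)] = 0. -/
open Filter

/-- Numerator of the high-SNR IMI correlation coefficient for `ν = 0`: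
`S(M) = ∑_{k=0}^{M−1} ∑_{j=M}^∞ ϱ^{2(j−k)}/(j−k)²`. -/
noncomputable def imiNumer (ϱ : ℝ) (M : ℕ) : ℝ :=
  ∑ k ∈ Finset.range M,
    ∑' j : ℕ, if M ≤ j then ϱ ^ (2 * (j - k)) / ((j : ℝ) - k) ^ 2 else 0

/-- Denominator: `∑_{k=0}^{M−1} ζ(2, M−k)`. -/
noncomputable def imiDenom (M : ℕ) : ℝ :=
  ∑ k ∈ Finset.range M, ∑' j : ℕ, (1 : ℝ) / (((M - k : ℕ) : ℝ) + j) ^ 2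

section aux

variable {ϱ : ℝ}

private lemma g_summable (hϱ0 : 0 ≤ ϱ) (hϱ1 : ϱ < 1) (M k : ℕ) (hk : k < M) :
    Summable (fun j : ℕ => if M ≤ j then ϱ ^ (2 * (j - k)) else 0) := by
  rw [← summable_nat_add_iff M]
  have heq : ∀ i : ℕ, (if M ≤ i + M then ϱ ^ (2 * (i + M - k)) else 0)
      = ϱ ^ (2 * (M - k)) * (ϱ ^ 2) ^ i := by
    intro i
    rw [if_pos (Nat.le_add_left M i)]
    have : i + M - k = (M - k) + i := by omega
    rw [this, Nat.mul_add, pow_add, ← pow_mul, mul_comm 2 i, pow_mul, mul_comm]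
  simp only [heq]
  exact (summable_geometric_of_lt_one (by positivity) (by nlinarith)).mul_left _

private lemma g_tsum (hϱ0 : 0 ≤ ϱ) (hϱ1 : ϱ < 1) (M k : ℕ) (hk : k < M) :
    ∑' j : ℕ, (if M ≤ j then ϱ ^ (2 * (j - k)) else 0)
      = ϱ ^ (2 * (M - k)) * (1 - ϱ ^ 2)⁻¹ := by
  have hs := g_summable hϱ0 hϱ1 M k hk
  have h := Summable.sum_add_tsum_nat_add (f := fun j : ℕ => if M ≤ j then ϱ ^ (2 * (j - k)) else 0) M hs
  have h0 : ∑ i ∈ Finset.range M, (if M ≤ i then ϱ ^ (2 * (i - k)) else 0) = 0 := by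
    apply Finset.sum_eq_zero
    intro i hi
    rw [if_neg (by simpa using Finset.mem_range.mp hi |>.not_ge)]
  rw [h0, zero_add] at h
  rw [← h]
  have heq : ∀ i : ℕ, (if M ≤ i + M then ϱ ^ (2 * (i + M - k)) else 0)
      = ϱ ^ (2 * (M - k)) * (ϱ ^ 2) ^ i := by
    intro i
    rw [if_pos (Nat.le_add_left M i)]
    have : i + M - k = (M - k) + i := by omega
    rw [this, Nat.mul_add, pow_add, ← pow_mul, mul_comm 2 i, pow_mul, mul_comm]
  simp only [heq]
  rw [tsum_mul_left, tsum_geometric_of_lt_one (by positivity) (by nlinarith)]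

private lemma f_le_g (M k : ℕ) (hk : k < M) (hϱ0 : 0 ≤ ϱ) : ∀ j : ℕ,
    (if M ≤ j then ϱ ^ (2 * (j - k)) / ((j : ℝ) - k) ^ 2 else 0)
      ≤ (if M ≤ j then ϱ ^ (2 * (j - k)) else 0) := by
  intro j
  by_cases hj : M ≤ j
  · rw [if_pos hj, if_pos hj]
    apply div_le_self (by positivity)
    have h1 : (1 : ℝ) ≤ (j : ℝ) - k := by
      have : k + 1 ≤ j := by omega
      have := Nat.cast_le (α := ℝ).mpr this
      push_cast at this ⊢
      linarith
    nlinarith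
  · simp [hj]

private lemma f_nonneg (M k : ℕ) (hϱ0 : 0 ≤ ϱ) : ∀ j : ℕ,
    0 ≤ (if M ≤ j then ϱ ^ (2 * (j - k)) / ((j : ℝ) - k) ^ 2 else 0) := by
  intro j
  by_cases hj : M ≤ j <;> simp [hj]
  positivity

private lemma numer_le (hϱ0 : 0 ≤ ϱ) (hϱ1 : ϱ < 1) (M : ℕ) :
    imiNumer ϱ M ≤ (1 - ϱ ^ 2)⁻¹ * (1 - ϱ ^ 2)⁻¹ := by
  have hr1 : ϱ ^ 2 < 1 := by nlinarith
  have hr0 : (0:ℝ) ≤ ϱ ^ 2 := by positivity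
  have step1 : imiNumer ϱ M ≤ ∑ k ∈ Finset.range M, ϱ ^ (2 * (M - k)) * (1 - ϱ ^ 2)⁻¹ := by
    apply Finset.sum_le_sum
    intro k hk
    have hkM := Finset.mem_range.mp hk
    rw [← g_tsum hϱ0 hϱ1 M k hkM]
    exact Summable.tsum_le_tsum (f_le_g M k hkM hϱ0)
      ((g_summable hϱ0 hϱ1 M k hkM).of_nonneg_of_le (f_nonneg M k hϱ0) (f_le_g M k hkM hϱ0))
      (g_summable hϱ0 hϱ1 M k hkM)
  refine step1.trans ?_
  rw [← Finset.sum_mul]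
  have step2 : ∑ k ∈ Finset.range M, ϱ ^ (2 * (M - k)) ≤ (1 - ϱ ^ 2)⁻¹ := by
    have hrefl := Finset.sum_range_reflect (fun i => ϱ ^ (2 * (M - i))) M
    calc ∑ k ∈ Finset.range M, ϱ ^ (2 * (M - k))
        = ∑ i ∈ Finset.range M, ϱ ^ (2 * (M - (M - 1 - i))) := hrefl.symm
      _ ≤ ∑ i ∈ Finset.range M, (ϱ ^ 2) ^ i := by
          apply Finset.sum_le_sum
          intro i hi
          have hiM := Finset.mem_range.mp hi
          have : M - (M - 1 - i) = i + 1 := by omega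
          rw [this, ← pow_mul, mul_comm]
          exact pow_le_pow_of_le_one (by positivity) (by nlinarith) (by omega)
      _ ≤ ∑' i : ℕ, (ϱ ^ 2) ^ i := Summable.sum_le_tsum _ (fun i _ => by positivity)
          (summable_geometric_of_lt_one hr0 hr1)
      _ = (1 - ϱ ^ 2)⁻¹ := tsum_geometric_of_lt_one hr0 hr1
  exact mul_le_mul_of_nonneg_right step2 (inv_nonneg.mpr (by nlinarith))

private lemma zeta_summable (p : ℕ) :
    Summable (fun j : ℕ => (1 : ℝ) / ((p : ℝ) + j) ^ 2) := by
  have : Summable (fun n : ℕ => (1 : ℝ) / (n : ℝ) ^ 2) :=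
    Real.summable_one_div_nat_pow.mpr one_lt_two
  have := (summable_nat_add_iff p).mpr this
  apply this.congr
  intro j
  push_cast
  ring_nf

private lemma zeta_ge (p : ℕ) (hp : 1 ≤ p) :
    (1 : ℝ) / (4 * p) ≤ ∑' j : ℕ, (1 : ℝ) / ((p : ℝ) + j) ^ 2 := by
  have hsum : ∑ j ∈ Finset.range p, (1 : ℝ) / ((p : ℝ) + j) ^ 2
      ≤ ∑' j : ℕ, (1 : ℝ) / ((p : ℝ) + j) ^ 2 :=
    Summable.sum_le_tsum _ (fun j _ => by positivity) (zeta_summable p)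
  refine le_trans ?_ hsum
  have hterm : ∀ j ∈ Finset.range p, (1 : ℝ) / (4 * p ^ 2) ≤ 1 / ((p : ℝ) + j) ^ 2 := by
    intro j hj
    have hjp := Finset.mem_range.mp hj
    have hle : (p : ℝ) + j ≤ 2 * p := by
      have := Nat.cast_le (α := ℝ).mpr hjp.le
      push_cast at this ⊢
      linarith
    have hp' : (1:ℝ) ≤ (p : ℝ) := by exact_mod_cast hp
    have hpos : (0:ℝ) < (p : ℝ) + j := by
      have hj0 : (0:ℝ) ≤ (j:ℝ) := Nat.cast_nonneg j
      linarith
    apply one_div_le_one_div_of_le (by positivity)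
    nlinarith
  calc (1 : ℝ) / (4 * p) = p * (1 / (4 * p ^ 2)) := by
        field_simp
    _ = ∑ _j ∈ Finset.range p, (1 : ℝ) / (4 * p ^ 2) := by
        rw [Finset.sum_const, Finset.card_range, nsmul_eq_mul]
    _ ≤ ∑ j ∈ Finset.range p, (1 : ℝ) / ((p : ℝ) + j) ^ 2 := Finset.sum_le_sum hterm

private lemma denom_ge (M : ℕ) :
    (1 / 4) * ∑ i ∈ Finset.range M, 1 / ((i : ℝ) + 1) ≤ imiDenom M := by
  have h2 : ∑ k ∈ Finset.range M, (1 : ℝ) / (4 * ((M - k : ℕ) : ℝ)) ≤ imiDenom M := by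
    apply Finset.sum_le_sum
    intro k hk
    exact zeta_ge (M - k) (by have := Finset.mem_range.mp hk; omega)
  refine le_trans (le_of_eq ?_) h2
  rw [Finset.mul_sum]
  rw [← Finset.sum_range_reflect (fun k => (1:ℝ) / (4 * ((M - k : ℕ) : ℝ))) M]
  apply Finset.sum_congr rfl
  intro i hi
  have hiM := Finset.mem_range.mp hi
  have : M - (M - 1 - i) = i + 1 := by omega
  rw [this]
  push_cast
  field_simp

private lemma denom_tendsto : Tendsto imiDenom atTop atTop := by
  apply tendsto_atTop_mono denom_ge
  exact Tendsto.const_mul_atTop (by norm_num)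
    Real.tendsto_sum_range_one_div_nat_succ_atTop

private lemma numer_nonneg (hϱ0 : 0 ≤ ϱ) (M : ℕ) : 0 ≤ imiNumer ϱ M := by
  apply Finset.sum_nonneg
  intro k _
  exact tsum_nonneg (f_nonneg M k hϱ0)

end aux

theorem imi_corr_ratio_tendsto_zero (ϱ : ℝ) (hϱ0 : 0 ≤ ϱ) (hϱ1 : ϱ < 1) :
    Tendsto (fun M : ℕ => imiNumer ϱ M / imiDenom M) atTop (nhds 0) := by
  set C : ℝ := (1 - ϱ ^ 2)⁻¹ * (1 - ϱ ^ 2)⁻¹ with hC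
  have hdenom := denom_tendsto
  have hdpos : ∀ᶠ M in atTop, (0:ℝ) < imiDenom M := hdenom.eventually_gt_atTop 0
  apply squeeze_zero' (g := fun M => C / imiDenom M)
  · filter_upwards with M
    have hd : 0 ≤ imiDenom M := by
      apply Finset.sum_nonneg
      intro k _
      exact tsum_nonneg (fun j => by positivity)
    exact div_nonneg (numer_nonneg hϱ0 M) hd
  · filter_upwards [hdpos] with M hM
    exact div_le_div_of_nonneg_right (numer_le hϱ0 hϱ1 M) hM.le
  · have : Tendsto (fun M => (imiDenom M)⁻¹) atTop (nhds 0) :=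
      hdenom.inv_tendsto_atTop
    simpa [div_eq_mul_inv] using this.const_mul C
end

section
/- Let (X, Y) be bivariate Gaussian with common mean μ, common variance σ² > 0, and correlation ρ ∈ (−1,1). Then for threshold I_th ≥ μ, P(X > I_th, Y > I_th) = (1/π) ∫₀^{π/4 + arcsin(ρ)/2} exp(−Ĩ²/(2 sin²θ)) dθ, where Ĩ = (I_th − μ)/σ. -/
/-!
With `a = (Ith - μ) / σ` and `γ = arccos ρ`, standardizing turns the probability into the
standard Gaussian mass `(2π)⁻¹ ∫ exp (-|p|² / 2)` of the wedge
`{p | ⟪p, (1, 0)⟫ > a, ⟪p, (cos γ, sin γ)⟫ > a}`. In polar coordinates the ray of angle `θ`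
lies in the wedge beyond radius `a / min (cos θ) (cos (θ - γ))`, so its radial integral is
`exp (-a² / (2 min (cos θ) (cos (θ - γ))²))`. The wedge is symmetric about its bisector
`θ = γ / 2`, on one side of which the binding constraint is `cos θ`; there `θ ↦ π / 2 - θ`
gives Craig's integrand over `(0, (π - γ) / 2)`, and `(π - γ) / 2 = π / 4 + arcsin ρ / 2`.
-/

open MeasureTheory Real

/-- Joint density of a bivariate Gaussian with common mean `μ`, common variance `σ²`
and correlation `ρ`. -/
noncomputable def biGaussDens (μ σ ρ x y : ℝ) : ℝ :=
  Real.exp (-(((x - μ) ^ 2 + (y - μ) ^ 2 - 2 * ρ * (x - μ) * (y - μ))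
      / (2 * σ ^ 2 * (1 - ρ ^ 2))))
    / (2 * Real.pi * σ ^ 2 * Real.sqrt (1 - ρ ^ 2))

open Set

theorem integral_Ioi_eq_mul_integral_Ioi_comp_affine (g : ℝ → ℝ) (c : ℝ) {b : ℝ} (hb : 0 < b)
    (A : ℝ) : ∫ y in Ioi A, g y = b * ∫ z in Ioi ((A - c) / b), g (c + b * z) := by
  have hshift : ∫ w in Ioi (A - c), g (c + w) = ∫ y in Ioi A, g y := by
    rw [← preimage_const_add_Ioi]
    exact (measurePreserving_add_left volume c).setIntegral_preimage_emb
      (measurableEmbedding_addLeft c) g _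
  rw [integral_comp_mul_left_Ioi (fun w => g (c + w)) _ hb, mul_div_cancel₀ _ hb.ne', hshift,
    smul_eq_mul, mul_inv_cancel_left₀ hb.ne']

theorem biGaussDens_affine (μ u z : ℝ) {σ ρ : ℝ} (hσ : σ ≠ 0) (hρ : ρ ^ 2 < 1) :
    biGaussDens μ σ ρ (μ + σ * u) (μ + σ * ρ * u + σ * √(1 - ρ ^ 2) * z)
      = exp (-((u ^ 2 + z ^ 2) / 2)) / (2 * π * σ ^ 2 * √(1 - ρ ^ 2)) := by
  have hs : √(1 - ρ ^ 2) ^ 2 = 1 - ρ ^ 2 := sq_sqrt (by linarith)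
  have hρ1 : 1 - ρ ^ 2 ≠ 0 := by linarith
  unfold biGaussDens
  congr 3
  field_simp
  linear_combination (σ ^ 2 * z ^ 2) * hs

theorem integral_Ioi_Ioi_biGaussDens (μ I : ℝ) {σ ρ : ℝ} (hσ : 0 < σ) (hρ : ρ ^ 2 < 1) :
    ∫ x in Ioi I, ∫ y in Ioi I, biGaussDens μ σ ρ x y
      = (2 * π)⁻¹ * ∫ u in Ioi ((I - μ) / σ),
          ∫ z in Ioi (((I - μ) / σ - ρ * u) / √(1 - ρ ^ 2)), exp (-((u ^ 2 + z ^ 2) / 2)) := by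
  have hs : 0 < √(1 - ρ ^ 2) := sqrt_pos.mpr (by linarith)
  have hσs : 0 < σ * √(1 - ρ ^ 2) := mul_pos hσ hs
  have hinner (u : ℝ) : ∫ y in Ioi I, biGaussDens μ σ ρ (μ + σ * u) y
      = σ⁻¹ * ((2 * π)⁻¹ * ∫ z in Ioi (((I - μ) / σ - ρ * u) / √(1 - ρ ^ 2)),
          exp (-((u ^ 2 + z ^ 2) / 2))) := by
    rw [integral_Ioi_eq_mul_integral_Ioi_comp_affine _ (μ + σ * ρ * u) hσs]
    simp_rw [biGaussDens_affine μ u _ hσ.ne' hρ, integral_div]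
    have : (I - (μ + σ * ρ * u)) / (σ * √(1 - ρ ^ 2)) = ((I - μ) / σ - ρ * u) / √(1 - ρ ^ 2) := by
      field_simp
      ring
    rw [this]
    field_simp
  rw [integral_Ioi_eq_mul_integral_Ioi_comp_affine _ μ hσ]
  simp_rw [hinner, integral_const_mul]
  field_simp

theorem integral_Ioi_mul_exp_neg_sq_div_two (m : ℝ) :
    ∫ r in Ioi m, r * exp (-(r ^ 2 / 2)) = exp (-(m ^ 2 / 2)) := by
  have hderiv (x : ℝ) : HasDerivAt (fun r => -exp (-(r ^ 2 / 2))) (x * exp (-(x ^ 2 / 2))) x := by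
    refine ((hasDerivAt_pow 2 x).div_const 2).neg.exp.neg.congr_deriv ?_
    simp only [Pi.neg_apply]
    push_cast
    ring
  have hint : IntegrableOn (fun r : ℝ => r * exp (-(r ^ 2 / 2))) (Ioi m) := by
    have h := (integrable_mul_exp_neg_mul_sq (b := (1 / 2 : ℝ)) one_half_pos).integrableOn
      (s := Ioi m)
    convert h using 3 with r
    ring_nf
  have hlim : Filter.Tendsto (fun r : ℝ => -exp (-(r ^ 2 / 2))) Filter.atTop (nhds 0) := by
    simpa using (tendsto_exp_atBot.comp <| Filter.tendsto_neg_atTop_atBot.comp <|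
      (Filter.tendsto_pow_atTop two_ne_zero).atTop_div_const two_pos).neg
  rw [integral_Ioi_of_hasDerivAt_of_tendsto (by fun_prop) (fun x _ => hderiv x) hint hlim]
  ring

theorem integrable_exp_neg_sq_add_sq_div_two :
    Integrable fun p : ℝ × ℝ => exp (-((p.1 ^ 2 + p.2 ^ 2) / 2)) := by
  have h := integrable_exp_neg_mul_sq (b := (1 / 2 : ℝ)) one_half_pos
  have hsplit : (fun p : ℝ × ℝ => exp (-((p.1 ^ 2 + p.2 ^ 2) / 2)))
      = fun p => exp (-(1 / 2) * p.1 ^ 2) * exp (-(1 / 2) * p.2 ^ 2) := by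
    ext p
    rw [← exp_add]
    ring_nf
  rw [hsplit, Measure.volume_eq_prod]
  exact h.mul_prod h

theorem integral_eq_integral_Ioo_integral_Ioi_polar {E : Type*} [NormedAddCommGroup E]
    [NormedSpace ℝ E] {f : ℝ × ℝ → E} (hf : Integrable f) :
    ∫ p, f p = ∫ θ in Ioo (-π) π, ∫ r in Ioi 0, r • f (r * cos θ, r * sin θ) := by
  have hpolar : IntegrableOn (fun p : ℝ × ℝ => p.1 • f (polarCoord.symm p)) polarCoord.target := by
    have := (integrableOn_image_iff_integrableOn_abs_det_fderiv_smul volume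
      polarCoord.open_target.measurableSet
      (fun p _ => (hasFDerivAt_polarCoord_symm p).hasFDerivWithinAt)
      polarCoord.symm.injOn f).mp
      (by rw [polarCoord.symm_image_target_eq_source]; exact hf.integrableOn)
    refine this.congr_fun (fun p hp => ?_) polarCoord.open_target.measurableSet
    simp only [det_fderivPolarCoordSymm, abs_of_pos (show 0 < p.1 from hp.1)]
  have htarget : polarCoord.target = Ioi 0 ×ˢ Ioo (-π) π := rfl
  rw [htarget, Measure.volume_eq_prod] at hpolar
  rw [← integral_comp_polarCoord_symm, htarget, Measure.volume_eq_prod, setIntegral_prod _ hpolar]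
  exact integral_integral_swap (by rw [Measure.prod_restrict]; exact hpolar)

theorem integral_Ioi_integral_Ioi_eq_integral_indicator {E : Type*} [NormedAddCommGroup E]
    [NormedSpace ℝ E] {f : ℝ × ℝ → E} (hf : Integrable f) {φ : ℝ → ℝ} (hφ : Measurable φ)
    (a : ℝ) :
    ∫ u in Ioi a, ∫ z in Ioi (φ u), f (u, z)
      = ∫ p, {p : ℝ × ℝ | a < p.1 ∧ φ p.1 < p.2}.indicator f p := by
  have hS : MeasurableSet {p : ℝ × ℝ | a < p.1 ∧ φ p.1 < p.2} :=
    (measurableSet_lt measurable_const measurable_fst).inter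
      (measurableSet_lt (hφ.comp measurable_fst) measurable_snd)
  rw [Measure.volume_eq_prod, integral_prod _ (hf.indicator hS),
    ← integral_indicator measurableSet_Ioi]
  congr 1 with u
  by_cases hu : a < u
  · rw [indicator_of_mem (mem_Ioi.mpr hu), ← integral_indicator measurableSet_Ioi]
    congr 1 with z
    simp [indicator_apply, hu]
  · simp [hu]

def wedge (a γ : ℝ) : Set (ℝ × ℝ) := {p | a < p.1 ∧ a < p.1 * cos γ + p.2 * sin γ}

theorem measurableSet_wedge (a γ : ℝ) : MeasurableSet (wedge a γ) :=
  (measurableSet_lt measurable_const measurable_fst).inter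
    (measurableSet_lt measurable_const
      ((measurable_fst.mul_const _).add (measurable_snd.mul_const _)))

theorem mk_mem_wedge_iff {a γ r θ : ℝ} (hr : 0 ≤ r) :
    (r * cos θ, r * sin θ) ∈ wedge a γ ↔ a < r * min (cos θ) (cos (θ - γ)) := by
  rw [mul_min_of_nonneg _ _ hr, lt_min_iff, cos_sub]
  simp only [wedge, mem_ofPred_eq]
  constructor <;> rintro ⟨h1, h2⟩ <;> exact ⟨h1, by linarith⟩

/-- `∫ r in Ioi (a / c), r * exp (-r ^ 2 / 2)`: the polar Gaussian mass of the part of a ray with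
direction cosine `c` beyond the line `p.1 = a`, which the ray never reaches when `c ≤ 0`. -/
noncomputable def craigIntegrand (a c : ℝ) : ℝ :=
  if 0 < c then exp (-(a ^ 2 / (2 * c ^ 2))) else 0

theorem craigIntegrand_of_nonpos (a : ℝ) {c : ℝ} (hc : c ≤ 0) : craigIntegrand a c = 0 :=
  if_neg hc.not_gt

theorem intervalIntegrable_craigIntegrand_comp (a : ℝ) {h : ℝ → ℝ} (hh : Measurable h)
    (x y : ℝ) : IntervalIntegrable (fun θ => craigIntegrand a (h θ)) volume x y := by
  have hmeas : Measurable (craigIntegrand a) :=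
    Measurable.ite measurableSet_Ioi (by fun_prop) measurable_const
  refine (intervalIntegrable_const (c := (1 : ℝ))).mono_fun (hmeas.comp hh).aestronglyMeasurable
    (Filter.Eventually.of_forall fun θ => ?_)
  simp only [norm_one, Real.norm_eq_abs, craigIntegrand]
  split_ifs
  · rw [abs_of_pos (exp_pos _), exp_le_one_iff, neg_nonpos]
    positivity
  · simp

theorem integral_Ioi_zero_mul_ite_exp_eq_craigIntegrand {a : ℝ} (ha : 0 ≤ a) (c : ℝ) :
    ∫ r in Ioi 0, r * (if a < r * c then exp (-(r ^ 2 / 2)) else 0) = craigIntegrand a c := by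
  unfold craigIntegrand
  split_ifs with hc
  · have hind : (fun r => r * (if a < r * c then exp (-(r ^ 2 / 2)) else 0))
        = (Ioi (a / c)).indicator fun r => r * exp (-(r ^ 2 / 2)) := by
      ext r
      simp [indicator_apply, div_lt_iff₀ hc]
    rw [hind, setIntegral_indicator measurableSet_Ioi, Ioi_inter_Ioi,
      max_eq_right (div_nonneg ha hc.le), integral_Ioi_mul_exp_neg_sq_div_two]
    congr 2
    field_simp
  · refine (setIntegral_congr_fun measurableSet_Ioi fun r (hr : 0 < r) => ?_).trans
      (integral_zero _ _)
    have : r * c ≤ a := by nlinarith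
    simp [not_lt.mpr this]

theorem cos_le_cos_sub_of_mem_Icc {γ θ : ℝ} (hγ0 : 0 ≤ γ) (hγ : γ ≤ 2 * π)
    (hθ : θ ∈ Icc (γ / 2) (γ / 2 + π)) : cos θ ≤ cos (θ - γ) := by
  have hdiff : cos θ - cos (θ - γ) = -2 * sin (θ - γ / 2) * sin (γ / 2) := by
    rw [cos_sub_cos]
    ring_nf
  have h1 : 0 ≤ sin (θ - γ / 2) :=
    sin_nonneg_of_nonneg_of_le_pi (by linarith [hθ.1]) (by linarith [hθ.2])
  have h2 : 0 ≤ sin (γ / 2) := sin_nonneg_of_nonneg_of_le_pi (by linarith) (by linarith)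
  nlinarith [mul_nonneg h1 h2]

theorem integral_Ioo_craigIntegrand_min_cos (a : ℝ) {γ : ℝ} (hγ0 : 0 < γ) (hγ : γ < π) :
    ∫ θ in Ioo (-π) π, craigIntegrand a (min (cos θ) (cos (θ - γ)))
      = 2 * ∫ θ in γ / 2..γ / 2 + π, craigIntegrand a (cos θ) := by
  set F := fun θ => craigIntegrand a (min (cos θ) (cos (θ - γ)))
  have hF (x y : ℝ) : IntervalIntegrable F volume x y :=
    intervalIntegrable_craigIntegrand_comp a (by fun_prop) x y
  have hper : Function.Periodic F (2 * π) := fun θ => by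
    simp only [F, cos_add_two_pi, show θ + 2 * π - γ = θ - γ + 2 * π by ring]
  have hsymm (θ : ℝ) : F (γ - θ) = F θ := by
    simp only [F]
    rw [show γ - θ - γ = -θ by ring, cos_neg, ← cos_neg (γ - θ), neg_sub, min_comm]
  calc ∫ θ in Ioo (-π) π, F θ
      = ∫ θ in (γ / 2 - π)..(γ / 2 - π) + 2 * π, F θ := by
        rw [← hper.intervalIntegral_add_eq (-π), show -π + 2 * π = π by ring,
          intervalIntegral.integral_of_le (by linarith [pi_pos]), integral_Ioc_eq_integral_Ioo]
    _ = (∫ θ in (γ / 2 - π)..γ / 2, F θ) + ∫ θ in γ / 2..γ / 2 + π, F θ := by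
        rw [show γ / 2 - π + 2 * π = γ / 2 + π by ring,
          intervalIntegral.integral_add_adjacent_intervals (hF _ _) (hF _ _)]
    _ = 2 * ∫ θ in γ / 2..γ / 2 + π, F θ := by
        rw [two_mul]
        congr 1
        -- the wedge is symmetric about its bisector `θ = γ / 2`
        have := intervalIntegral.integral_comp_sub_left F γ (a := γ / 2) (b := γ / 2 + π)
        simp only [hsymm] at this
        rw [this]
        ring_nf
    _ = 2 * ∫ θ in γ / 2..γ / 2 + π, craigIntegrand a (cos θ) := by
        congr 1
        refine intervalIntegral.integral_congr fun θ hθ => ?_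
        rw [uIcc_of_le (by linarith [pi_pos])] at hθ
        simp only [F, min_eq_left (cos_le_cos_sub_of_mem_Icc hγ0.le (by linarith) hθ)]

theorem integral_craigIntegrand_cos (a : ℝ) {t : ℝ} (ht0 : 0 ≤ t) (ht : t ≤ π / 2) :
    ∫ θ in t..t + π, craigIntegrand a (cos θ)
      = ∫ θ in (0 : ℝ)..π / 2 - t, exp (-(a ^ 2 / (2 * sin θ ^ 2))) := by
  have hF (x y : ℝ) : IntervalIntegrable (fun θ => craigIntegrand a (sin θ)) volume x y :=
    intervalIntegrable_craigIntegrand_comp a measurable_sin x y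
  have hneg : ∫ θ in (π / 2 - (t + π))..0, craigIntegrand a (sin θ) = 0 := by
    refine (intervalIntegral.integral_congr (g := fun _ => 0) fun θ hθ => ?_).trans (by simp)
    rw [uIcc_of_le (by linarith [pi_pos])] at hθ
    exact craigIntegrand_of_nonpos a (sin_nonpos_of_nonpos_of_neg_pi_le hθ.2 (by linarith [hθ.1]))
  simp_rw [← sin_pi_div_two_sub]
  rw [intervalIntegral.integral_comp_sub_left (fun θ => craigIntegrand a (sin θ)),
    ← intervalIntegral.integral_add_adjacent_intervals (hF _ 0) (hF _ _), hneg, zero_add,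
    intervalIntegral.integral_of_le (by linarith), intervalIntegral.integral_of_le (by linarith)]
  refine setIntegral_congr_fun measurableSet_Ioc fun θ hθ => if_pos ?_
  exact sin_pos_of_pos_of_lt_pi hθ.1 (by linarith [hθ.2, pi_pos])

theorem integral_wedge_gaussian {a γ : ℝ} (ha : 0 ≤ a) (hγ0 : 0 < γ) (hγ : γ < π) :
    ∫ p, (wedge a γ).indicator (fun p => exp (-((p.1 ^ 2 + p.2 ^ 2) / 2))) p
      = 2 * ∫ θ in (0 : ℝ)..(π - γ) / 2, exp (-(a ^ 2 / (2 * sin θ ^ 2))) := by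
  have hradial (θ : ℝ) : ∫ r in Ioi 0,
      r • (wedge a γ).indicator (fun p => exp (-((p.1 ^ 2 + p.2 ^ 2) / 2))) (r * cos θ, r * sin θ)
      = craigIntegrand a (min (cos θ) (cos (θ - γ))) := by
    rw [← integral_Ioi_zero_mul_ite_exp_eq_craigIntegrand ha]
    refine setIntegral_congr_fun measurableSet_Ioi fun r (hr : 0 < r) => ?_
    have hnorm : (r * cos θ) ^ 2 + (r * sin θ) ^ 2 = r ^ 2 := by
      rw [mul_pow, mul_pow, ← mul_add, cos_sq_add_sin_sq, mul_one]
    rw [smul_eq_mul]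
    congr 1
    by_cases hmem : a < r * min (cos θ) (cos (θ - γ))
    · rw [if_pos hmem, indicator_of_mem ((mk_mem_wedge_iff hr.le).mpr hmem), hnorm]
    · rw [if_neg hmem, indicator_of_notMem (mt (mk_mem_wedge_iff hr.le).mp hmem)]
  rw [integral_eq_integral_Ioo_integral_Ioi_polar (integrable_exp_neg_sq_add_sq_div_two.indicator
    (measurableSet_wedge a γ)), funext hradial,
    integral_Ioo_craigIntegrand_min_cos a hγ0 hγ,
    integral_craigIntegrand_cos a (by linarith) (by linarith),
    show π / 2 - γ / 2 = (π - γ) / 2 by ring]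

theorem integral_Ioi_integral_Ioi_gaussian_eq_craig {a ρ : ℝ} (ha : 0 ≤ a) (hρ : -1 < ρ)
    (hρ' : ρ < 1) :
    ∫ u in Ioi a, ∫ z in Ioi ((a - ρ * u) / √(1 - ρ ^ 2)), exp (-((u ^ 2 + z ^ 2) / 2))
      = 2 * ∫ θ in (0 : ℝ)..π / 4 + arcsin ρ / 2, exp (-(a ^ 2 / (2 * sin θ ^ 2))) := by
  have hs : 0 < √(1 - ρ ^ 2) := sqrt_pos.mpr (by nlinarith)
  have hwedge :
      {p : ℝ × ℝ | a < p.1 ∧ (a - ρ * p.1) / √(1 - ρ ^ 2) < p.2} = wedge a (arccos ρ) := by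
    ext p
    simp only [wedge, mem_ofPred_eq, cos_arccos hρ.le hρ'.le, sin_arccos, div_lt_iff₀ hs]
    constructor <;> rintro ⟨h1, h2⟩ <;> exact ⟨h1, by linarith⟩
  rw [integral_Ioi_integral_Ioi_eq_integral_indicator integrable_exp_neg_sq_add_sq_div_two
    (by fun_prop) a, hwedge, integral_wedge_gaussian ha (arccos_pos.mpr hρ')
    ((arccos_lt_pi).mpr hρ), arccos_eq_pi_div_two_sub_arcsin]
  ring_nf

/-- Craig-form representation of the joint exceedance probability of an equicorrelated
bivariate normal at a common threshold above the mean. -/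
theorem biGauss_joint_exceedance (μ σ ρ Ith : ℝ) (hσ : 0 < σ) (hρ : -1 < ρ) (hρ' : ρ < 1)
    (hI : μ ≤ Ith) :
    (∫ x in Set.Ioi Ith, ∫ y in Set.Ioi Ith, biGaussDens μ σ ρ x y)
      = (1 / Real.pi) *
        ∫ θ in (0 : ℝ)..(Real.pi / 4 + Real.arcsin ρ / 2),
          Real.exp (-(((Ith - μ) / σ) ^ 2 / (2 * Real.sin θ ^ 2))) := by
  rw [integral_Ioi_Ioi_biGaussDens μ Ith hσ (by nlinarith),
    integral_Ioi_integral_Ioi_gaussian_eq_craig (div_nonneg (sub_nonneg.mpr hI) hσ.le) hρ hρ']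
  field_simp
end
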